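/- Let C be a combinatorial class with C(x) > 0 on (0,ρ), let n ∈ ℕ with c_n > 0, and define p_n(x) = c_n x^n / C(x), the probability under the ordinary Boltzmann distribution with parameter x that the sampled structure has size n. If x_n ∈ (0,ρ) satisfies x_n·C′(x_n)/C(x_n) = n, then x_n maximizes p_n over (0,ρ): for all x ∈ (0,ρ), c_n x^n / C(x) ≤ c_n x_n^n / C(x_n). That is, the parameter value giving expected size n also maximizes the probability that the output has size exactly n. -/

import Mathlib

/-!
Write `x = x_n e^L`. By convexity of `exp`, `(x / x_n)^k ≥ (x / x_n)^n (1 + (k - n) L)` for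
every `k`. Multiplying by `c_k x_n^k` and summing, the correction term is
`L (x_n C'(x_n) - n C(x_n))`, which vanishes exactly because `x_n` has expected size `n`;
hence `C(x) ≥ (x / x_n)^n C(x_n)`, i.e. `p_n(x) ≤ p_n(x_n)`.
-/

open Real

section PowerSeries

variable {a : ℕ → ℝ} {ρ : ℝ}

lemma summable_nat_mul_mul_pow (ha : ∀ k, 0 ≤ a k)
    (hsum : ∀ y, 0 ≤ y → y < ρ → Summable fun k => a k * y ^ k)
    {r : ℝ} (hr0 : 0 ≤ r) (hrρ : r < ρ) :
    Summable fun k : ℕ => (k : ℝ) * a k * r ^ k := by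
  obtain ⟨r', hrr', hr'ρ⟩ := exists_between hrρ
  have hr' : 0 < r' := hr0.trans_lt hrr'
  have hsum' := hsum r' hr'.le hr'ρ
  have hq : ‖r / r'‖ < 1 := by
    rwa [Real.norm_of_nonneg (by positivity), div_lt_one hr']
  have hgeo : Summable fun k : ℕ => (k : ℝ) * (r / r') ^ k := by
    simpa using summable_pow_mul_geometric_of_norm_lt_one 1 hq
  refine .of_nonneg_of_le (fun k : ℕ => by have := ha k; positivity) (fun k => ?_)
    (hgeo.mul_left (∑' k, a k * r' ^ k))
  calc (k : ℝ) * a k * r ^ k = a k * r' ^ k * ((k : ℝ) * (r / r') ^ k) := by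
        rw [div_pow]; field_simp
    _ ≤ (∑' k, a k * r' ^ k) * ((k : ℝ) * (r / r') ^ k) := by
        gcongr
        exact hsum'.le_tsum k fun j _ => by have := ha j; positivity

lemma natCast_mul_pow_sub_one_mul (k : ℕ) (r : ℝ) :
    (k : ℝ) * r ^ (k - 1) * r = k * r ^ k := by
  cases k <;> simp [pow_succ, mul_assoc]

lemma hasDerivAt_tsum_mul_pow (ha : ∀ k, 0 ≤ a k)
    (hsum : ∀ y, 0 ≤ y → y < ρ → Summable fun k => a k * y ^ k)
    {x : ℝ} (hx0 : 0 ≤ x) (hxρ : x < ρ) :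
    HasDerivAt (fun y => ∑' k, a k * y ^ k) (∑' k : ℕ, a k * ((k : ℝ) * x ^ (k - 1))) x := by
  obtain ⟨r, hxr, hrρ⟩ := exists_between hxρ
  have hr : 0 < r := hx0.trans_lt hxr
  have hx : x ∈ Metric.ball 0 r := by
    rwa [Metric.mem_ball, dist_zero_right, norm_of_nonneg hx0]
  have hu : Summable fun k : ℕ => a k * ((k : ℝ) * r ^ (k - 1)) := by
    refine ((summable_nat_mul_mul_pow ha hsum hr.le hrρ).mul_right r⁻¹).congr
      fun k => ?_
    rw [mul_right_comm (k : ℝ), ← natCast_mul_pow_sub_one_mul]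
    field_simp
  refine hasDerivAt_tsum_of_isPreconnected hu Metric.isOpen_ball
    (convex_ball 0 r).isPreconnected (fun k y _ => (hasDerivAt_pow k y).const_mul (a k))
    (fun k y hy => ?_) hx (hsum x hx0 hxρ) hx
  rw [Metric.mem_ball, dist_zero_right] at hy
  rw [norm_mul, norm_mul, norm_pow, Real.norm_of_nonneg (ha k), Real.norm_natCast]
  gcongr
  exact ha k

lemma mul_deriv_tsum_mul_pow (ha : ∀ k, 0 ≤ a k)
    (hsum : ∀ y, 0 ≤ y → y < ρ → Summable fun k => a k * y ^ k)
    {x : ℝ} (hx0 : 0 ≤ x) (hxρ : x < ρ) :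
    x * deriv (fun y => ∑' k, a k * y ^ k) x = ∑' k : ℕ, (k : ℝ) * a k * x ^ k := by
  rw [(hasDerivAt_tsum_mul_pow ha hsum hx0 hxρ).deriv, ← tsum_mul_left]
  congr 1 with k
  rw [mul_right_comm (k : ℝ), ← natCast_mul_pow_sub_one_mul]
  ring

end PowerSeries

lemma pow_mul_pow_mul_one_add_le {x y : ℝ} (hx : 0 < x) (hy : 0 < y) (k n : ℕ) :
    x ^ n * y ^ k * (1 + ((k : ℝ) - n) * log (x / y)) ≤ y ^ n * x ^ k := by
  set L := log (x / y)
  have hxy : x = y * exp L := by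
    rw [exp_log (by positivity)]; field_simp
  have htangent : exp (n * L) * (1 + ((k : ℝ) - n) * L) ≤ exp (k * L) := by
    calc exp (n * L) * (1 + ((k : ℝ) - n) * L) ≤ exp (n * L) * exp (((k : ℝ) - n) * L) := by
          gcongr; linarith [add_one_le_exp (((k : ℝ) - n) * L)]
      _ = exp (k * L) := by rw [← exp_add]; ring_nf
  rw [hxy, mul_pow, mul_pow, ← exp_nat_mul, ← exp_nat_mul]
  calc y ^ n * exp (n * L) * y ^ k * (1 + ((k : ℝ) - n) * L)
      = y ^ n * y ^ k * (exp (n * L) * (1 + ((k : ℝ) - n) * L)) := by ring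
    _ ≤ y ^ n * y ^ k * exp (k * L) := by gcongr
    _ = y ^ n * (y ^ k * exp (k * L)) := by ring

lemma pow_mul_le_pow_mul_of_hasSum {a : ℕ → ℝ} (ha : ∀ k, 0 ≤ a k) {x y S T : ℝ}
    (hx : 0 < x) (hy : 0 < y) {n : ℕ} (hS : HasSum (fun k => a k * y ^ k) S)
    (hmean : HasSum (fun k : ℕ => (k : ℝ) * a k * y ^ k) (n * S))
    (hT : HasSum (fun k => a k * x ^ k) T) :
    x ^ n * S ≤ y ^ n * T := by
  set L := log (x / y)
  have hlin := ((hS.mul_left (x ^ n)).add (hmean.mul_left (x ^ n * L))).sub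
    (hS.mul_left (x ^ n * L * n))
  refine le_of_eq_of_le ?_ (hasSum_le (fun k => ?_) hlin (hT.mul_left (y ^ n)))
  · ring
  · calc _ = a k * (x ^ n * y ^ k * (1 + ((k : ℝ) - n) * L)) := by ring
      _ ≤ a k * (y ^ n * x ^ k) :=
        mul_le_mul_of_nonneg_left (pow_mul_pow_mul_one_add_le hx hy k n) (ha k)
      _ = _ := by ring

theorem expected_size_parameter_maximizes_size_probability_general
    (c : ℕ → ℕ)
    (ρ : ℝ)
    (hrad : ∀ y : ℝ, 0 ≤ y → y < ρ → Summable fun n : ℕ => (c n : ℝ) * y ^ n)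
    (f : ℝ → ℝ) (hf : ∀ y : ℝ, f y = ∑' n : ℕ, (c n : ℝ) * y ^ n)
    (hpos : ∀ y ∈ Set.Ioo (0 : ℝ) ρ, 0 < f y)
    (n : ℕ)
    (xn : ℝ) (hxn : xn ∈ Set.Ioo (0 : ℝ) ρ)
    (hExp : xn * deriv f xn / f xn = n) :
    ∀ x ∈ Set.Ioo (0 : ℝ) ρ,
      (c n : ℝ) * x ^ n / f x ≤ (c n : ℝ) * xn ^ n / f xn := by
  intro x hx
  have hc : ∀ k, (0 : ℝ) ≤ c k := fun k => Nat.cast_nonneg _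
  have hfx := hpos x hx
  have hfxn := hpos xn hxn
  have hsum : ∀ y, 0 ≤ y → y < ρ → HasSum (fun k => (c k : ℝ) * y ^ k) (f y) :=
    fun y hy0 hyρ => hf y ▸ (hrad y hy0 hyρ).hasSum
  have hmean : HasSum (fun k : ℕ => (k : ℝ) * c k * xn ^ k) (n * f xn) := by
    have hderiv := mul_deriv_tsum_mul_pow hc hrad hxn.1.le hxn.2
    rw [← funext hf] at hderiv
    rw [← (div_eq_iff hfxn.ne').mp hExp, hderiv]
    exact (summable_nat_mul_mul_pow hc hrad hxn.1.le hxn.2).hasSum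
  have hpow := pow_mul_le_pow_mul_of_hasSum hc hx.1 hxn.1 (hsum xn hxn.1.le hxn.2) hmean
    (hsum x hx.1.le hx.2)
  rw [div_le_div_iff₀ hfx hfxn, mul_assoc, mul_assoc]
  exact mul_le_mul_of_nonneg_left hpow (hc n)

/-- If `x_n ∈ (0, ρ)` satisfies `x_n * C'(x_n) / C(x_n) = n` (the
parameter giving expected size `n`), then `x_n` maximizes over `(0, ρ)` the
probability `p_n(x) = c n * x ^ n / C(x)` that a Boltzmann(`x`) sample has size
exactly `n`. -/
theorem expected_size_parameter_maximizes_size_probability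
    (C : Type*) [Countable C] (size : C → ℕ)
    (hfin : ∀ n : ℕ, {γ : C | size γ = n}.Finite)
    (c : ℕ → ℕ) (hc : ∀ n, c n = Nat.card {γ : C // size γ = n})
    (ρ : ℝ) (hρ : 0 < ρ)
    (hrad : ∀ y : ℝ, 0 ≤ y → y < ρ → Summable fun n : ℕ => (c n : ℝ) * y ^ n)
    (f : ℝ → ℝ) (hf : ∀ y : ℝ, f y = ∑' n : ℕ, (c n : ℝ) * y ^ n)
    (hpos : ∀ y ∈ Set.Ioo (0 : ℝ) ρ, 0 < f y)
    (n : ℕ) (hn : 0 < c n)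
    (xn : ℝ) (hxn : xn ∈ Set.Ioo (0 : ℝ) ρ)
    (hExp : xn * deriv f xn / f xn = n) :
    ∀ x ∈ Set.Ioo (0 : ℝ) ρ,
      (c n : ℝ) * x ^ n / f x ≤ (c n : ℝ) * xn ^ n / f xn :=
  expected_size_parameter_maximizes_size_probability_general c ρ hrad f hf hpos n xn hxn hExp
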